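/- Over R = Z[t,t⁻¹]/((1-t)²), with A = [[0,1],[t,1-t]] and p = 2k+1 odd, A^p = [[k - kt, 1 - k + kt],[t - k + kt, 1 - kt + k - t]]. -/
import Mathlib


open LaurentPolynomial

lemma pretzel_odd_matrix_power_aux {R : Type*} [CommRing R] (t : R)
    (h2 : (1 - t) ^ 2 = 0) (k : ℕ) :
    (!![0, 1; t, 1 - t]) ^ (2 * k + 1) =
      !![(k : R) - k * t, 1 - k + k * t;
         t - k + k * t, 1 - k * t + k - t] := by
  induction k with
  | zero =>
    simp only [Nat.cast_zero, mul_zero, zero_add, pow_one, zero_mul]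
    ext i j
    fin_cases i <;> fin_cases j <;> simp
  | succ k ih =>
    have : 2 * (k + 1) + 1 = (2 * k + 1) + 1 + 1 := by ring
    rw [this, pow_succ, pow_succ, ih]
    ext i j
    fin_cases i <;> fin_cases j <;>
      simp [Matrix.mul_fin_two, Nat.cast_succ]
    · linear_combination (-(k : R) * t - k - 1) * h2
    · linear_combination ((k : R) * t + k + 1) * h2
    · linear_combination ((k : R) * t + t + k + 1) * h2
    · linear_combination (-(k : R) * t - t - k - 1) * h2

/-- Over `R = ℤ[t,t⁻¹]/((1-t)²)` with `t` the class of `T 1`, let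
`A = [[0,1],[t,1-t]]` and let `p = 2k+1` be odd.  Then
`A^p = [[k - kt, 1 - k + kt],[t - k + kt, 1 - kt + k - t]]`. -/
theorem pretzel_odd_matrix_power (k : ℕ)
    (t : LaurentPolynomial ℤ ⧸ Ideal.span {((1 : LaurentPolynomial ℤ) - T 1) ^ 2})
    (ht : t = Ideal.Quotient.mk
      (Ideal.span {((1 : LaurentPolynomial ℤ) - T 1) ^ 2})
      (T 1 : LaurentPolynomial ℤ)) :
    (!![0, 1; t, 1 - t]) ^ (2 * k + 1) =
      !![(k : _) - k * t, 1 - k + k * t;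
         t - k + k * t, 1 - k * t + k - t] := by
  apply pretzel_odd_matrix_power_aux
  rw [ht]
  rw [show (1 : LaurentPolynomial ℤ ⧸ Ideal.span {((1 : LaurentPolynomial ℤ) - T 1) ^ 2})
    - Ideal.Quotient.mk _ (T 1) = Ideal.Quotient.mk _ (1 - T 1) by simp, ← map_pow]
  exact Ideal.Quotient.eq_zero_iff_mem.mpr (Ideal.subset_span rfl)
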